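/- For every odd positive integer i, the element y_1^i + y_2^i + ⋯ + y_n^i is central in the affine Brauer algebra A(n,N). -/

import Mathlib

noncomputable section

open scoped BigOperators

/-- Index type for the generators of the affine Brauer algebra `A(n,N)`:
the generators `s₁,…,s_{n−1}`, `t₁,…,t_{n−1}`, `y₁,…,yₙ` and `w₁, w₂, …`. -/
abbrev AIdx (n : ℕ) := (Fin (n - 1) ⊕ Fin (n - 1)) ⊕ (Fin n ⊕ ℕ)

/-- The generator `s_k` (1-based) in the free algebra. -/
def aS (n : ℕ) (k : ℕ) : FreeAlgebra ℂ (AIdx n) :=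
  if h : 1 ≤ k ∧ k ≤ n - 1 then
    FreeAlgebra.ι ℂ (Sum.inl (Sum.inl ⟨k - 1, by omega⟩)) else 0

/-- The generator `t_k` (1-based) in the free algebra. -/
def aT (n : ℕ) (k : ℕ) : FreeAlgebra ℂ (AIdx n) :=
  if h : 1 ≤ k ∧ k ≤ n - 1 then
    FreeAlgebra.ι ℂ (Sum.inl (Sum.inr ⟨k - 1, by omega⟩)) else 0

/-- The generator `y_k` (1-based) in the free algebra. -/
def aY (n : ℕ) (k : ℕ) : FreeAlgebra ℂ (AIdx n) :=
  if h : 1 ≤ k ∧ k ≤ n then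
    FreeAlgebra.ι ℂ (Sum.inr (Sum.inl ⟨k - 1, by omega⟩)) else 0

/-- The generator `w_i` for `i ≥ 1`, with the convention `w₀ = N`. -/
def aW (n : ℕ) (N : ℂ) (i : ℕ) : FreeAlgebra ℂ (AIdx n) :=
  if 1 ≤ i then FreeAlgebra.ι ℂ (Sum.inr (Sum.inr (i - 1)))
  else algebraMap ℂ (FreeAlgebra ℂ (AIdx n)) N

/-- The defining relations of the affine Brauer algebra `A(n,N)`. -/
inductive AffRel (n : ℕ) (N : ℂ) :
    FreeAlgebra ℂ (AIdx n) → FreeAlgebra ℂ (AIdx n) → Prop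
  | s_sq (k : ℕ) (h : 1 ≤ k ∧ k ≤ n - 1) :
      AffRel n N (aS n k * aS n k) 1
  | t_sq (k : ℕ) (h : 1 ≤ k ∧ k ≤ n - 1) :
      AffRel n N (aT n k * aT n k) (N • aT n k)
  | st (k : ℕ) (h : 1 ≤ k ∧ k ≤ n - 1) :
      AffRel n N (aS n k * aT n k) (aT n k)
  | ts (k : ℕ) (h : 1 ≤ k ∧ k ≤ n - 1) :
      AffRel n N (aT n k * aS n k) (aT n k)
  | braid (k : ℕ) (h : 1 ≤ k ∧ k + 1 ≤ n - 1) :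
      AffRel n N (aS n k * aS n (k+1) * aS n k) (aS n (k+1) * aS n k * aS n (k+1))
  | ttt_lo (k : ℕ) (h : 1 ≤ k ∧ k + 1 ≤ n - 1) :
      AffRel n N (aT n k * aT n (k+1) * aT n k) (aT n k)
  | ttt_hi (k : ℕ) (h : 1 ≤ k ∧ k + 1 ≤ n - 1) :
      AffRel n N (aT n (k+1) * aT n k * aT n (k+1)) (aT n (k+1))
  | stt (k : ℕ) (h : 1 ≤ k ∧ k + 1 ≤ n - 1) :
      AffRel n N (aS n k * aT n (k+1) * aT n k) (aS n (k+1) * aT n k)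
  | tts (k : ℕ) (h : 1 ≤ k ∧ k + 1 ≤ n - 1) :
      AffRel n N (aT n (k+1) * aT n k * aS n (k+1)) (aT n (k+1) * aS n k)
  | ss_comm (k l : ℕ)
      (h : 1 ≤ k ∧ k ≤ n - 1 ∧ 1 ≤ l ∧ l ≤ n - 1 ∧ (k + 1 < l ∨ l + 1 < k)) :
      AffRel n N (aS n k * aS n l) (aS n l * aS n k)
  | ts_comm (k l : ℕ)
      (h : 1 ≤ k ∧ k ≤ n - 1 ∧ 1 ≤ l ∧ l ≤ n - 1 ∧ (k + 1 < l ∨ l + 1 < k)) :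
      AffRel n N (aT n k * aS n l) (aS n l * aT n k)
  | tt_comm (k l : ℕ)
      (h : 1 ≤ k ∧ k ≤ n - 1 ∧ 1 ≤ l ∧ l ≤ n - 1 ∧ (k + 1 < l ∨ l + 1 < k)) :
      AffRel n N (aT n k * aT n l) (aT n l * aT n k)
  | yy_comm (k l : ℕ) (h : 1 ≤ k ∧ k ≤ n ∧ 1 ≤ l ∧ l ≤ n) :
      AffRel n N (aY n k * aY n l) (aY n l * aY n k)
  | ws_comm (i k : ℕ) (h : 1 ≤ i ∧ 1 ≤ k ∧ k ≤ n - 1) :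
      AffRel n N (aW n N i * aS n k) (aS n k * aW n N i)
  | wt_comm (i k : ℕ) (h : 1 ≤ i ∧ 1 ≤ k ∧ k ≤ n - 1) :
      AffRel n N (aW n N i * aT n k) (aT n k * aW n N i)
  | wy_comm (i k : ℕ) (h : 1 ≤ i ∧ 1 ≤ k ∧ k ≤ n) :
      AffRel n N (aW n N i * aY n k) (aY n k * aW n N i)
  | ww_comm (i j : ℕ) (h : 1 ≤ i ∧ 1 ≤ j) :
      AffRel n N (aW n N i * aW n N j) (aW n N j * aW n N i)
  | sy_comm (k l : ℕ)
      (h : 1 ≤ k ∧ k ≤ n - 1 ∧ 1 ≤ l ∧ l ≤ n ∧ l ≠ k ∧ l ≠ k + 1) :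
      AffRel n N (aS n k * aY n l) (aY n l * aS n k)
  | ty_comm (k l : ℕ)
      (h : 1 ≤ k ∧ k ≤ n - 1 ∧ 1 ≤ l ∧ l ≤ n ∧ l ≠ k ∧ l ≠ k + 1) :
      AffRel n N (aT n k * aY n l) (aY n l * aT n k)
  | sy_lo (k : ℕ) (h : 1 ≤ k ∧ k ≤ n - 1) :
      AffRel n N (aS n k * aY n k) (aY n (k+1) * aS n k + aT n k - 1)
  | sy_hi (k : ℕ) (h : 1 ≤ k ∧ k ≤ n - 1) :
      AffRel n N (aS n k * aY n (k+1)) (aY n k * aS n k + 1 - aT n k)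
  | tyy (k : ℕ) (h : 1 ≤ k ∧ k ≤ n - 1) :
      AffRel n N (aT n k * (aY n k + aY n (k+1))) 0
  | yyt (k : ℕ) (h : 1 ≤ k ∧ k ≤ n - 1) :
      AffRel n N ((aY n k + aY n (k+1)) * aT n k) 0
  | tyt (i : ℕ) (h : 1 ≤ i ∧ 1 ≤ n - 1) :
      AffRel n N (aT n 1 * aY n 1 ^ i * aT n 1) (aW n N i * aT n 1)

/-- The affine Brauer algebra `A(n,N)`. -/
abbrev AffineBrauer (n : ℕ) (N : ℂ) := RingQuot (AffRel n N)

/-- The generator `s_k` (1-based) of `A(n,N)`. -/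
def sA (n : ℕ) (N : ℂ) (k : ℕ) : AffineBrauer n N :=
  RingQuot.mkAlgHom ℂ (AffRel n N) (aS n k)

/-- The generator `t_k` (1-based) of `A(n,N)`. -/
def tA (n : ℕ) (N : ℂ) (k : ℕ) : AffineBrauer n N :=
  RingQuot.mkAlgHom ℂ (AffRel n N) (aT n k)

/-- The generator `y_k` (1-based) of `A(n,N)`. -/
def yA (n : ℕ) (N : ℂ) (k : ℕ) : AffineBrauer n N :=
  RingQuot.mkAlgHom ℂ (AffRel n N) (aY n k)

/-- The central generator `w_i` of `A(n,N)` for `i ≥ 1` (with `w₀ = N`). -/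
def wA (n : ℕ) (N : ℂ) (i : ℕ) : AffineBrauer n N :=
  RingQuot.mkAlgHom ℂ (AffRel n N) (aW n N i)

/-!
Fix `1 ≤ k < n` and write `a = y_k`, `b = y_{k+1}`, `s = s_k`, `t = t_k`. Since `a` and `b` commute
and `t (a + b) = 0 = (a + b) t`, we get `t a^m = t (-b)^m` and `a^m t = (-b)^m t`; for odd `i` this
kills both `t (a^i + b^i)` and `(a^i + b^i) t`. The twisted Leibniz rule gives
`s a^m - b^m s = ∑_j b^j (t - 1) a^(m-1-j)`, and the same with `a, b` swapped and `1 - t` in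
place of `t - 1`. For odd `m` the `t`-terms of the two sums agree termwise, the signs `(-1)^j` and
`(-1)^(m-1-j)` being equal, while the `1`-terms agree after reversing the order of summation.
Hence `s_k` and `t_k` commute with `y_k^i + y_{k+1}^i`, and they commute with every other `y_l`.
The `y_l` and `w_m` commute with all `y`'s, and an element commuting with every generator is central.
-/

open Finset

section Ring

variable {R : Type*} [Ring R] {s t a b : R}

theorem mul_pow_eq_mul_neg_pow (hab : Commute a b) (h : t * (a + b) = 0) (m : ℕ) :
    t * a ^ m = t * (-b) ^ m := by
  have hta : t * a = t * -b := by
    rw [mul_neg]; exact eq_neg_of_add_eq_zero_left (by rwa [← mul_add])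
  induction m with
  | zero => simp
  | succ m ih =>
    rw [pow_succ, ← mul_assoc, ih, mul_assoc, (hab.neg_right.pow_right m).eq.symm, ← mul_assoc,
      hta, mul_assoc, ← pow_succ']

theorem pow_mul_eq_neg_pow_mul (hab : Commute a b) (h : (a + b) * t = 0) (m : ℕ) :
    a ^ m * t = (-b) ^ m * t := by
  have hat : a * t = -b * t := by
    rw [neg_mul]; exact eq_neg_of_add_eq_zero_left (by rwa [← add_mul])
  induction m with
  | zero => simp
  | succ m ih =>
    rw [pow_succ', mul_assoc, ih, ← mul_assoc, (hab.neg_right.pow_right m).eq, mul_assoc, hat,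
      ← mul_assoc, ← pow_succ]

theorem mul_pow_add_pow_of_odd (hab : Commute a b) (h : t * (a + b) = 0) {i : ℕ} (hi : Odd i) :
    t * (a ^ i + b ^ i) = 0 := by
  rw [mul_add, mul_pow_eq_mul_neg_pow hab h, hi.neg_pow, mul_neg, neg_add_cancel]

theorem pow_add_pow_mul_of_odd (hab : Commute a b) (h : (a + b) * t = 0) {i : ℕ} (hi : Odd i) :
    (a ^ i + b ^ i) * t = 0 := by
  rw [add_mul, pow_mul_eq_neg_pow_mul hab h, hi.neg_pow, neg_mul, neg_add_cancel]

theorem mul_pow_sub_pow_mul {c : R} (h : s * a - b * s = c) (m : ℕ) :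
    s * a ^ m - b ^ m * s = ∑ j ∈ range m, b ^ j * c * a ^ (m - 1 - j) := by
  induction m with
  | zero => simp
  | succ m ih =>
    have hsa : s * a = b * s + c := by rw [← h]; abel
    rw [sum_range_succ', pow_succ', ← mul_assoc, hsa, pow_succ', add_mul, mul_assoc, mul_assoc,
      add_sub_right_comm, ← mul_sub, ih, mul_sum]
    simp only [pow_succ', mul_assoc, Nat.add_sub_cancel, pow_zero, one_mul, Nat.sub_zero,
      Nat.sub_sub, add_comm 1]

theorem sum_pow_mul_mul_pow_comm_of_odd (hab : Commute a b) (ht : t * (a + b) = 0)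
    (ht' : (a + b) * t = 0) {m : ℕ} (hm : Odd m) :
    ∑ j ∈ range m, b ^ j * t * a ^ (m - 1 - j) = ∑ j ∈ range m, a ^ j * t * b ^ (m - 1 - j) := by
  refine sum_congr rfl fun j hj => ?_
  rw [mul_assoc, mul_pow_eq_mul_neg_pow hab ht, pow_mul_eq_neg_pow_mul hab ht']
  have hj := mem_range.mp hj
  rcases Nat.even_or_odd j with hje | hjo
  · have : Even (m - 1 - j) := by
      obtain ⟨r, rfl⟩ := hm; obtain ⟨q, rfl⟩ := hje; exact ⟨r - q, by omega⟩
    rw [this.neg_pow, hje.neg_pow, mul_assoc]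
  · have : Odd (m - 1 - j) := by
      obtain ⟨r, rfl⟩ := hm; obtain ⟨q, rfl⟩ := hjo; exact ⟨r - q - 1, by omega⟩
    rw [this.neg_pow, hjo.neg_pow, mul_neg, neg_mul, mul_neg, neg_mul, mul_assoc]

theorem commute_pow_add_pow_of_odd (hab : Commute a b) (hsa : s * a - b * s = t - 1)
    (hsb : s * b - a * s = 1 - t) (ht : t * (a + b) = 0) (ht' : (a + b) * t = 0) {i : ℕ}
    (hi : Odd i) : Commute s (a ^ i + b ^ i) := by
  have split : ∀ x y c d : R, ∑ j ∈ range i, x ^ j * (c - d) * y ^ (i - 1 - j)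
      = ∑ j ∈ range i, x ^ j * c * y ^ (i - 1 - j)
        - ∑ j ∈ range i, x ^ j * d * y ^ (i - 1 - j) := by
    intro x y c d
    simp only [mul_sub, sub_mul, sum_sub_distrib]
  have hdiff : s * (a ^ i + b ^ i) - (a ^ i + b ^ i) * s
      = (s * a ^ i - b ^ i * s) + (s * b ^ i - a ^ i * s) := by noncomm_ring
  rw [Commute, SemiconjBy, ← sub_eq_zero, hdiff, mul_pow_sub_pow_mul hsa, mul_pow_sub_pow_mul hsb,
    split, split, sum_pow_mul_mul_pow_comm_of_odd hab ht ht' hi]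
  simp only [mul_one]
  rw [hab.geom_sum₂_comm]
  abel

end Ring

theorem Commute.sum_range_of_commute_add {R : Type*} [Semiring R] {x : R} {f : ℕ → R} {n k : ℕ}
    (hk : k + 1 < n) (hpair : Commute x (f k + f (k + 1)))
    (hrest : ∀ j < n, j ≠ k → j ≠ k + 1 → Commute x (f j)) :
    Commute x (∑ j ∈ range n, f j) := by
  have hsub : {k, k + 1} ⊆ range n := by
    intro j hj
    simp only [mem_insert, mem_singleton] at hj
    simp only [mem_range]
    omega
  rw [← sum_sdiff hsub, sum_pair (by omega)]
  refine (Commute.sum_right _ _ _ fun j hj => hrest j ?_ ?_ ?_).add_right hpair <;>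
    simp only [mem_sdiff, mem_range, mem_insert, mem_singleton] at hj <;> omega

theorem FreeAlgebra.mem_center_of_commute_ι {R X A : Type*} [CommSemiring R] [Semiring A]
    [Algebra R A] {f : FreeAlgebra R X →ₐ[R] A} (hf : Function.Surjective f) {z : A}
    (h : ∀ x, Commute (f (FreeAlgebra.ι R x)) z) : z ∈ Subalgebra.center R A := by
  rw [Subalgebra.mem_center_iff]
  intro g
  obtain ⟨p, rfl⟩ := hf g
  induction p using FreeAlgebra.induction with
  | grade0 r => rw [AlgHom.commutes]; exact Algebra.commutes r z
  | grade1 x => exact h x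
  | mul p q hp hq => rw [map_mul]; exact Commute.mul_left hp hq
  | add p q hp hq => rw [map_add]; exact Commute.add_left hp hq

namespace AffineBrauer

variable {n : ℕ} {N : ℂ}

theorem commute_yA_yA {k l : ℕ} (hk : 1 ≤ k ∧ k ≤ n) (hl : 1 ≤ l ∧ l ≤ n) :
    Commute (yA n N k) (yA n N l) := (commute_iff_eq _ _).mpr <| by
  simpa only [map_mul, yA] using
    RingQuot.mkAlgHom_rel ℂ (AffRel.yy_comm (N := N) k l ⟨hk.1, hk.2, hl⟩)

theorem commute_wA_yA {m k : ℕ} (hm : 1 ≤ m) (hk : 1 ≤ k ∧ k ≤ n) :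
    Commute (wA n N m) (yA n N k) := (commute_iff_eq _ _).mpr <| by
  simpa only [map_mul, wA, yA] using RingQuot.mkAlgHom_rel ℂ (AffRel.wy_comm m k ⟨hm, hk⟩)

theorem sA_mul_yA_sub {k : ℕ} (hk : 1 ≤ k ∧ k ≤ n - 1) :
    sA n N k * yA n N k - yA n N (k + 1) * sA n N k = tA n N k - 1 := by
  rw [sub_eq_iff_eq_add']
  simpa only [map_mul, map_add, map_sub, map_one, sA, tA, yA, add_sub_assoc] using
    RingQuot.mkAlgHom_rel ℂ (AffRel.sy_lo (N := N) k hk)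

theorem sA_mul_yA_succ_sub {k : ℕ} (hk : 1 ≤ k ∧ k ≤ n - 1) :
    sA n N k * yA n N (k + 1) - yA n N k * sA n N k = 1 - tA n N k := by
  rw [sub_eq_iff_eq_add']
  simpa only [map_mul, map_add, map_sub, map_one, sA, tA, yA, add_sub_assoc] using
    RingQuot.mkAlgHom_rel ℂ (AffRel.sy_hi (N := N) k hk)

theorem tA_mul_yA_add {k : ℕ} (hk : 1 ≤ k ∧ k ≤ n - 1) :
    tA n N k * (yA n N k + yA n N (k + 1)) = 0 := by
  simpa only [map_mul, map_add, map_zero, tA, yA] using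
    RingQuot.mkAlgHom_rel ℂ (AffRel.tyy (N := N) k hk)

theorem yA_add_mul_tA {k : ℕ} (hk : 1 ≤ k ∧ k ≤ n - 1) :
    (yA n N k + yA n N (k + 1)) * tA n N k = 0 := by
  simpa only [map_mul, map_add, map_zero, tA, yA] using
    RingQuot.mkAlgHom_rel ℂ (AffRel.yyt (N := N) k hk)

theorem commute_sA_yA {k l : ℕ} (hk : 1 ≤ k ∧ k ≤ n - 1) (hl : 1 ≤ l ∧ l ≤ n)
    (hlk : l ≠ k) (hlk' : l ≠ k + 1) :
    Commute (sA n N k) (yA n N l) := (commute_iff_eq _ _).mpr <| by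
  simpa only [map_mul, sA, yA] using
    RingQuot.mkAlgHom_rel ℂ (AffRel.sy_comm (N := N) k l ⟨hk.1, hk.2, hl.1, hl.2, hlk, hlk'⟩)

theorem commute_tA_yA {k l : ℕ} (hk : 1 ≤ k ∧ k ≤ n - 1) (hl : 1 ≤ l ∧ l ≤ n)
    (hlk : l ≠ k) (hlk' : l ≠ k + 1) :
    Commute (tA n N k) (yA n N l) := (commute_iff_eq _ _).mpr <| by
  simpa only [map_mul, tA, yA] using
    RingQuot.mkAlgHom_rel ℂ (AffRel.ty_comm (N := N) k l ⟨hk.1, hk.2, hl.1, hl.2, hlk, hlk'⟩)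

theorem mkAlgHom_ι_eq_sA (j : Fin (n - 1)) :
    RingQuot.mkAlgHom ℂ (AffRel n N) (FreeAlgebra.ι ℂ (.inl (.inl j))) = sA n N (j + 1) := by
  simp [sA, aS]

theorem mkAlgHom_ι_eq_tA (j : Fin (n - 1)) :
    RingQuot.mkAlgHom ℂ (AffRel n N) (FreeAlgebra.ι ℂ (.inl (.inr j))) = tA n N (j + 1) := by
  simp [tA, aT]

theorem mkAlgHom_ι_eq_yA (j : Fin n) :
    RingQuot.mkAlgHom ℂ (AffRel n N) (FreeAlgebra.ι ℂ (.inr (.inl j))) = yA n N (j + 1) := by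
  simp [yA, aY]

theorem mkAlgHom_ι_eq_wA (m : ℕ) :
    RingQuot.mkAlgHom ℂ (AffRel n N) (FreeAlgebra.ι ℂ (.inr (.inr m))) = wA n N (m + 1) := by
  simp [wA, aW]

theorem commute_sA_sum_pow {k i : ℕ} (hk : k + 1 < n) (hi : Odd i) :
    Commute (sA n N (k + 1)) (∑ j ∈ range n, yA n N (j + 1) ^ i) := by
  have hk' : 1 ≤ k + 1 ∧ k + 1 ≤ n - 1 := by omega
  refine Commute.sum_range_of_commute_add hk ?_ fun j hj hjk hjk' => ?_
  · exact commute_pow_add_pow_of_odd (commute_yA_yA (by omega) (by omega)) (sA_mul_yA_sub hk')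
      (sA_mul_yA_succ_sub hk') (tA_mul_yA_add hk') (yA_add_mul_tA hk') hi
  · exact (commute_sA_yA hk' (by omega) (by omega) (by omega)).pow_right i

theorem commute_tA_sum_pow {k i : ℕ} (hk : k + 1 < n) (hi : Odd i) :
    Commute (tA n N (k + 1)) (∑ j ∈ range n, yA n N (j + 1) ^ i) := by
  have hk' : 1 ≤ k + 1 ∧ k + 1 ≤ n - 1 := by omega
  have hab : Commute (yA n N (k + 1)) (yA n N (k + 1 + 1)) := commute_yA_yA (by omega) (by omega)
  refine Commute.sum_range_of_commute_add hk ?_ fun j hj hjk hjk' => ?_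
  · exact (mul_pow_add_pow_of_odd hab (tA_mul_yA_add hk') hi).trans
      (pow_add_pow_mul_of_odd hab (yA_add_mul_tA hk') hi).symm
  · exact (commute_tA_yA hk' (by omega) (by omega) (by omega)).pow_right i

end AffineBrauer

open AffineBrauer in
/-- For every odd positive integer `i`, the element
`y₁^i + ⋯ + yₙ^i` is central in the affine Brauer algebra `A(n,N)`. -/
theorem affine_odd_power_sum_central (n : ℕ) (N : ℂ) (i : ℕ) (hi : Odd i) :
    (∑ k ∈ Finset.range n, yA n N (k + 1) ^ i) ∈
      Subalgebra.center ℂ (AffineBrauer n N) := by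
  refine FreeAlgebra.mem_center_of_commute_ι (RingQuot.mkAlgHom_surjective ℂ (AffRel n N)) ?_
  rintro ((j | j) | (j | m))
  · rw [mkAlgHom_ι_eq_sA]
    exact commute_sA_sum_pow (by omega) hi
  · rw [mkAlgHom_ι_eq_tA]
    exact commute_tA_sum_pow (by omega) hi
  · rw [mkAlgHom_ι_eq_yA]
    exact Commute.sum_right _ _ _ fun k hk =>
      (commute_yA_yA (by omega) (by have := mem_range.mp hk; omega)).pow_right i
  · rw [mkAlgHom_ι_eq_wA]
    exact Commute.sum_right _ _ _ fun k hk =>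
      (commute_wA_yA (by omega) (by have := mem_range.mp hk; omega)).pow_right i
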